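/- Let Ω₁ ⊂ ℂⁿ and Ω₂ ⊂ ℂᵐ be bounded domains, p > 0 not an even integer, and T : Aᵖ(Ω₁) → Aᵖ(Ω₂) a linear isometry. Then: (i) for every z ∈ Ω'₁ there is a unique w ∈ Ω₂ with φ(z)·(Tφ₀)(w) = (Tφ)(w)·φ₀(z) for all φ, φ₀ ∈ Aᵖ(Ω₁), so the assignment F(z) = w defines a bijection F : Ω'₁ → Ω'₂; (ii) if z_j ∈ Ω'₁ converges to z₀ ∈ Ω₁ and F(z_j) converges to w₀ ∈ Ω₂, then z₀ ∈ Ω'₁, w₀ ∈ Ω'₂, and F(z₀) = w₀; (iii) for z ∈ Ω'₁ and φ ∈ Aᵖ(Ω₁), φ(z) = 0 if and only if (Tφ)(F(z)) = 0. -/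

import Mathlib

open MeasureTheory Metric Set
open scoped Real ENNReal Topology

noncomputable section

/-- `Cn n` is complex Euclidean space `ℂⁿ`. -/
abbrev Cn (n : ℕ) : Type := EuclideanSpace ℂ (Fin n)

instance (n : ℕ) : MeasurableSpace (Cn n) :=
  MeasurableSpace.comap (WithLp.ofLp (p := 2)) (MeasurableSpace.pi : MeasurableSpace (Fin n → ℂ))
instance (n : ℕ) : MeasureTheory.MeasureSpace (Cn n) :=
  ⟨Measure.map (WithLp.toLp 2) (MeasureTheory.MeasureSpace.pi : MeasureSpace (Fin n → ℂ)).volume⟩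

/-- A function `u : E → [-∞, ∞)` is plurisubharmonic on `Ω` if it is upper semicontinuous on
`Ω`, takes values in `[-∞, ∞)` there, and satisfies the sub-mean value inequality on circles
contained (together with their discs) in `Ω` along every complex line.  The sub-mean value
inequality is expressed through all truncations `max u (-c)` of `u` from below. -/
def PlurisubharmonicOn {E : Type*} [NormedAddCommGroup E] [NormedSpace ℂ E]
    (u : E → EReal) (Ω : Set E) : Prop :=
  UpperSemicontinuousOn u Ω ∧ (∀ x ∈ Ω, u x ≠ ⊤) ∧
  ∀ (a b : E) (r : ℝ), 0 < r →
    (∀ t : ℂ, ‖t‖ ≤ r → a + t • b ∈ Ω) →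
    ∀ c : ℝ, u a ≤
      ((((2 * Real.pi)⁻¹ *
        ∫ θ in (0:ℝ)..(2 * Real.pi),
          max (u (a + ((r : ℂ) * Complex.exp ((θ : ℂ) * Complex.I)) • b)).toReal (-c)) : ℝ) : EReal)

/-- A bounded domain in `ℂⁿ`: open, connected and bounded. -/
def IsBoundedDomain {n : ℕ} (Ω : Set (Cn n)) : Prop :=
  IsOpen Ω ∧ IsConnected Ω ∧ Bornology.IsBounded Ω

/-- Membership in the space `Aᵖ(Ω)` of `Lᵖ`-integrable holomorphic functions on `Ω`. -/
def MemAp {n : ℕ} (Ω : Set (Cn n)) (p : ℝ) (φ : Cn n → ℂ) : Prop :=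
  DifferentiableOn ℂ φ Ω ∧ IntegrableOn (fun z => ‖φ z‖ ^ p) Ω volume

/-- The `Lᵖ`-pseudonorm `‖φ‖_p = (∫_Ω |φ|ᵖ)^{1/p}`. -/
def pNorm {n : ℕ} (Ω : Set (Cn n)) (p : ℝ) (φ : Cn n → ℂ) : ℝ :=
  (∫ z in Ω, ‖φ z‖ ^ p) ^ (1 / p)

/-- The `p`-Bergman kernel `B_{Ω,p}(z) = sup |φ(z)|²/‖φ‖_p²`, valued in `[0,∞]`. -/
def pBergman {n : ℕ} (Ω : Set (Cn n)) (p : ℝ) (z : Cn n) : ℝ≥0∞ :=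
  ⨆ φ : {φ : Cn n → ℂ // MemAp Ω p φ ∧ ¬ Set.EqOn φ 0 Ω},
    ENNReal.ofReal (‖φ.1 z‖ ^ 2 / pNorm Ω p φ.1 ^ 2)

/-- The `p`-Bergman kernel of `Ω` is exhaustive: every sublevel set is compact. -/
def BergmanExhaustive {n : ℕ} (Ω : Set (Cn n)) (p : ℝ) : Prop :=
  ∀ A : ℝ, IsCompact {z ∈ Ω | pBergman Ω p z ≤ ENNReal.ofReal A}

/-- `Ω` is hyperconvex: it carries a negative plurisubharmonic exhaustion function. -/
def Hyperconvex {n : ℕ} (Ω : Set (Cn n)) : Prop :=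
  ∃ ρ : Cn n → EReal, PlurisubharmonicOn ρ Ω ∧ (∀ z ∈ Ω, ρ z < 0) ∧
    ∀ c : ℝ, c < 0 → IsCompact {z ∈ Ω | ρ z ≤ ((c : ℝ) : EReal)}

/-- A surjective linear isometry `T : Aᵖ(Ω₁) → Aᵖ(Ω₂)` (as a map on representing functions;
linearity, surjectivity and values only matter on `Ω₂`). -/
structure ApIsometry {n m : ℕ} (Ω₁ : Set (Cn n)) (Ω₂ : Set (Cn m)) (p : ℝ) where
  toFun : (Cn n → ℂ) → (Cn m → ℂ)
  mem : ∀ φ, MemAp Ω₁ p φ → MemAp Ω₂ p (toFun φ)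
  map_add : ∀ φ ψ, MemAp Ω₁ p φ → MemAp Ω₁ p ψ →
    ∀ w ∈ Ω₂, toFun (fun z => φ z + ψ z) w = toFun φ w + toFun ψ w
  map_smul : ∀ (c : ℂ) (φ), MemAp Ω₁ p φ → ∀ w ∈ Ω₂,
    toFun (fun z => c * φ z) w = c * toFun φ w
  surjective : ∀ ψ, MemAp Ω₂ p ψ → ∃ φ, MemAp Ω₁ p φ ∧ ∀ w ∈ Ω₂, toFun φ w = ψ w
  isometry : ∀ φ, MemAp Ω₁ p φ → pNorm Ω₂ p (toFun φ) = pNorm Ω₁ p φ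

/-- `F` is a biholomorphic map from `Ω₁` onto `Ω₂`. -/
def Biholo {n m : ℕ} (Ω₁ : Set (Cn n)) (Ω₂ : Set (Cn m)) (F : Cn n → Cn m) : Prop :=
  DifferentiableOn ℂ F Ω₁ ∧ Set.MapsTo F Ω₁ Ω₂ ∧
  ∃ G : Cn m → Cn n, DifferentiableOn ℂ G Ω₂ ∧ Set.MapsTo G Ω₂ Ω₁ ∧
    (∀ z ∈ Ω₁, G (F z) = z) ∧ (∀ w ∈ Ω₂, F (G w) = w)

/-- The holomorphic Jacobian determinant `J_F` of `F` on `Ω` (equidimensional case). -/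
def jacDet {n : ℕ} (Ω : Set (Cn n)) (F : Cn n → Cn n) (z : Cn n) : ℂ :=
  LinearMap.det (fderivWithin ℂ F Ω z).toLinearMap

/-- `|J_F(z)|²`, expressed as `|det (dF(z)* ∘ dF(z))|`; for equidimensional holomorphic maps
this equals the squared modulus of the holomorphic Jacobian determinant. -/
def jacAbsSq {n m : ℕ} (Ω : Set (Cn n)) (F : Cn n → Cn m) (z : Cn n) : ℝ :=
  ‖(LinearMap.det
    (((ContinuousLinearMap.adjoint (fderivWithin ℂ F Ω z)).comp
      (fderivWithin ℂ F Ω z)).toLinearMap))‖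

/-- `Ω` is homogeneous regular (uniformly squeezing). -/
def HomogeneousRegular {n : ℕ} (Ω : Set (Cn n)) : Prop :=
  ∃ c : ℝ, 0 < c ∧ c < 1 ∧ ∀ z ∈ Ω, ∃ f : Cn n → Cn n,
    DifferentiableOn ℂ f Ω ∧ Set.InjOn f Ω ∧ Set.MapsTo f Ω (Metric.ball 0 1) ∧
    f z = 0 ∧ Metric.ball (0 : Cn n) c ⊆ f '' Ω

/-- `Ω` is a bounded strongly pseudoconvex domain with `C²` boundary: `Ω = {ρ < 0}` for a `C²`
defining function `ρ` on a neighborhood of `closure Ω`, with nonvanishing differential on the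
boundary, whose Levi form is positive definite on the complex tangent space at every boundary
point (the Levi form in direction `v` is `D²ρ(v,v) + D²ρ(iv,iv)` up to a positive factor). -/
def StronglyPseudoconvexC2 {n : ℕ} (Ω : Set (Cn n)) : Prop :=
  ∃ (U : Set (Cn n)) (ρ : Cn n → ℝ), IsOpen U ∧ closure Ω ⊆ U ∧
    ContDiffOn ℝ 2 ρ U ∧ Ω = {z ∈ U | ρ z < 0} ∧
    ∀ z ∈ frontier Ω, fderiv ℝ ρ z ≠ 0 ∧
      ∀ v : Cn n, v ≠ 0 → fderiv ℝ ρ z v = 0 → fderiv ℝ ρ z (Complex.I • v) = 0 →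
        0 < fderiv ℝ (fun w => fderiv ℝ ρ w v) z v
          + fderiv ℝ (fun w => fderiv ℝ ρ w (Complex.I • v)) z (Complex.I • v)

/-- `Ω` is pseudoconvex: `-log dist(·, ∂Ω)` is plurisubharmonic on `Ω`. -/
def PseudoconvexDomain {n : ℕ} (Ω : Set (Cn n)) : Prop :=
  PlurisubharmonicOn (fun z => ((-Real.log (Metric.infDist z (frontier Ω)) : ℝ) : EReal)) Ω

/-- The relation defining the induced map: `φ(z)·(Tφ₀)(w) = (Tφ)(w)·φ₀(z)` for all
`φ, φ₀ ∈ Aᵖ(Ω₁)`. -/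
def ApRel {n m : ℕ} {Ω₁ : Set (Cn n)} {Ω₂ : Set (Cn m)} {p : ℝ}
    (T : ApIsometry Ω₁ Ω₂ p) (z : Cn n) (w : Cn m) : Prop :=
  ∀ φ φ₀ : Cn n → ℂ, MemAp Ω₁ p φ → MemAp Ω₁ p φ₀ →
    φ z * T.toFun φ₀ w = T.toFun φ w * φ₀ z

/-- The set `Ω'₁ ⊆ Ω₁`. -/
def OmegaP1 {n m : ℕ} {Ω₁ : Set (Cn n)} {Ω₂ : Set (Cn m)} {p : ℝ}
    (T : ApIsometry Ω₁ Ω₂ p) : Set (Cn n) :=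
  {z ∈ Ω₁ | ∃ w ∈ Ω₂, ApRel T z w}

/-- The set `Ω'₂ ⊆ Ω₂`. -/
def OmegaP2 {n m : ℕ} {Ω₁ : Set (Cn n)} {Ω₂ : Set (Cn m)} {p : ℝ}
    (T : ApIsometry Ω₁ Ω₂ p) : Set (Cn m) :=
  {w ∈ Ω₂ | ∃ z ∈ Ω₁, ApRel T z w}

/-- `e^{-x}` for `x ∈ [-∞, +∞]`, valued in `[0, ∞]`. -/
def eNeg (x : EReal) : ℝ≥0∞ :=
  if x = ⊥ then ⊤ else if x = ⊤ then 0 else ENNReal.ofReal (Real.exp (-x.toReal))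

/-- The logarithm `[0, ∞] → [-∞, ∞]`. -/
def eLog (x : ℝ≥0∞) : EReal :=
  if x = 0 then ⊥ else if x = ⊤ then ⊤ else ((Real.log x.toReal : ℝ) : EReal)

/-
If `ApRel T z w` holds with `w ∈ Ω₂`, testing against `φ₀ = 1` gives `(Tφ)(w) = φ(z) · (T1)(w)`
for every `φ ∈ Aᵖ(Ω₁)`. For the `φ₁` with `Tφ₁ = 1` (surjectivity) this reads
`φ₁(z) · (T1)(w) = 1`, so `(T1)(w)` is nonzero and determined by `z`; this yields (iii).
The coordinate functions lie in `Aᵖ` of a bounded domain, so `Aᵖ` separates points: if `z` is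
related to `w` and `w'`, every `Tφ` takes the same value at `w` and `w'`, and if `z` and `z'` are
related to `w`, every `φ` takes the same value at `z` and `z'`; this gives (i). Elements of `Aᵖ`
are continuous, so the relation is closed in `Ω₁ × Ω₂`, which gives (ii).
-/

instance (n : ℕ) : BorelSpace (Cn n) :=
  PiLp.borelSpace (X := fun _ : Fin n => ℂ) 2

instance (n : ℕ) : IsFiniteMeasureOnCompacts (volume : Measure (Cn n)) :=
  Measure.IsFiniteMeasureOnCompacts.map (volume : Measure (Fin n → ℂ))
    (PiLp.homeomorph 2 fun _ : Fin n => ℂ).symm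

section BergmanSpace

variable {n : ℕ} {Ω : Set (Cn n)} {p : ℝ}

theorem memAp_of_differentiable (hΩ : Bornology.IsBounded Ω) (hp : 0 ≤ p) {φ : Cn n → ℂ}
    (hφ : Differentiable ℂ φ) : MemAp Ω p φ :=
  ⟨hφ.differentiableOn,
    ((hφ.continuous.norm.rpow_const fun _ => Or.inr hp).continuousOn.integrableOn_compact
      hΩ.isCompact_closure).mono_set subset_closure⟩

theorem eq_of_forall_memAp_apply_eq (hΩ : Bornology.IsBounded Ω) (hp : 0 ≤ p) {z z' : Cn n}
    (h : ∀ φ, MemAp Ω p φ → φ z = φ z') : z = z' :=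
  PiLp.ext fun i =>
    h _ (memAp_of_differentiable hΩ hp (EuclideanSpace.proj (𝕜 := ℂ) i).differentiable)

theorem MemAp.continuousAt (hΩ : IsOpen Ω) {φ : Cn n → ℂ} (hφ : MemAp Ω p φ) {z : Cn n}
    (hz : z ∈ Ω) : ContinuousAt φ z :=
  hφ.1.continuousOn.continuousAt (hΩ.mem_nhds hz)

end BergmanSpace

namespace ApRel

variable {n m : ℕ} {Ω₁ : Set (Cn n)} {Ω₂ : Set (Cn m)} {p : ℝ} {T : ApIsometry Ω₁ Ω₂ p}
  {z z' : Cn n} {w w' : Cn m}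

theorem apply_eq_mul_apply_one (hΩ₁ : Bornology.IsBounded Ω₁) (hp : 0 ≤ p)
    (hrel : ApRel T z w) {φ : Cn n → ℂ} (hφ : MemAp Ω₁ p φ) :
    T.toFun φ w = φ z * T.toFun (fun _ => 1) w := by
  simpa using
    (hrel φ (fun _ => 1) hφ (memAp_of_differentiable hΩ₁ hp (differentiable_const 1))).symm

theorem mul_apply_one_eq_one (hΩ₁ : Bornology.IsBounded Ω₁) (hp : 0 ≤ p) (hrel : ApRel T z w)
    (hw : w ∈ Ω₂) {φ₁ : Cn n → ℂ} (hφ₁ : MemAp Ω₁ p φ₁) (hTφ₁ : ∀ v ∈ Ω₂, T.toFun φ₁ v = 1) :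
    φ₁ z * T.toFun (fun _ => 1) w = 1 := by
  rw [← hrel.apply_eq_mul_apply_one hΩ₁ hp hφ₁, hTφ₁ w hw]

theorem apply_one_ne_zero (hΩ₁ : Bornology.IsBounded Ω₁) (hΩ₂ : Bornology.IsBounded Ω₂)
    (hp : 0 ≤ p) (hrel : ApRel T z w) (hw : w ∈ Ω₂) : T.toFun (fun _ => 1) w ≠ 0 := by
  obtain ⟨φ₁, hφ₁, hTφ₁⟩ :=
    T.surjective _ (memAp_of_differentiable hΩ₂ hp (differentiable_const 1))
  exact right_ne_zero_of_mul_eq_one (hrel.mul_apply_one_eq_one hΩ₁ hp hw hφ₁ hTφ₁)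

theorem apply_eq_zero_iff (hΩ₁ : Bornology.IsBounded Ω₁) (hΩ₂ : Bornology.IsBounded Ω₂)
    (hp : 0 ≤ p) (hrel : ApRel T z w) (hw : w ∈ Ω₂) {φ : Cn n → ℂ} (hφ : MemAp Ω₁ p φ) :
    φ z = 0 ↔ T.toFun φ w = 0 := by
  rw [hrel.apply_eq_mul_apply_one hΩ₁ hp hφ, mul_eq_zero,
    or_iff_left (hrel.apply_one_ne_zero hΩ₁ hΩ₂ hp hw)]

theorem right_unique (hΩ₁ : Bornology.IsBounded Ω₁) (hΩ₂ : Bornology.IsBounded Ω₂)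
    (hp : 0 ≤ p) (hrel : ApRel T z w) (hrel' : ApRel T z w') (hw : w ∈ Ω₂) (hw' : w' ∈ Ω₂) :
    w = w' := by
  obtain ⟨φ₁, hφ₁, hTφ₁⟩ :=
    T.surjective _ (memAp_of_differentiable hΩ₂ hp (differentiable_const 1))
  have h := hrel.mul_apply_one_eq_one hΩ₁ hp hw hφ₁ hTφ₁
  have h' := hrel'.mul_apply_one_eq_one hΩ₁ hp hw' hφ₁ hTφ₁
  have hone : T.toFun (fun _ => 1) w = T.toFun (fun _ => 1) w' :=
    mul_left_cancel₀ (left_ne_zero_of_mul_eq_one h) (h.trans h'.symm)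
  refine eq_of_forall_memAp_apply_eq hΩ₂ hp fun ψ hψ => ?_
  obtain ⟨φ, hφ, hTφ⟩ := T.surjective ψ hψ
  rw [← hTφ w hw, ← hTφ w' hw', hrel.apply_eq_mul_apply_one hΩ₁ hp hφ,
    hrel'.apply_eq_mul_apply_one hΩ₁ hp hφ, hone]

theorem left_unique (hΩ₁ : Bornology.IsBounded Ω₁) (hΩ₂ : Bornology.IsBounded Ω₂)
    (hp : 0 ≤ p) (hrel : ApRel T z w) (hrel' : ApRel T z' w) (hw : w ∈ Ω₂) : z = z' := by
  refine eq_of_forall_memAp_apply_eq hΩ₁ hp fun φ hφ => ?_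
  refine mul_right_cancel₀ (hrel.apply_one_ne_zero hΩ₁ hΩ₂ hp hw) ?_
  rw [← hrel.apply_eq_mul_apply_one hΩ₁ hp hφ, ← hrel'.apply_eq_mul_apply_one hΩ₁ hp hφ]

theorem of_tendsto (hΩ₁ : IsOpen Ω₁) (hΩ₂ : IsOpen Ω₂) {zs : ℕ → Cn n} {ws : ℕ → Cn m}
    {z₀ : Cn n} {w₀ : Cn m} (hrel : ∀ j, ApRel T (zs j) (ws j)) (hz₀ : z₀ ∈ Ω₁) (hw₀ : w₀ ∈ Ω₂)
    (hzs : Filter.Tendsto zs Filter.atTop (𝓝 z₀))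
    (hws : Filter.Tendsto ws Filter.atTop (𝓝 w₀)) : ApRel T z₀ w₀ := by
  intro φ φ₀ hφ hφ₀
  have lhs := ((hφ.continuousAt hΩ₁ hz₀).tendsto.comp hzs).mul
    (((T.mem φ₀ hφ₀).continuousAt hΩ₂ hw₀).tendsto.comp hws)
  have rhs := (((T.mem φ hφ).continuousAt hΩ₂ hw₀).tendsto.comp hws).mul
    ((hφ₀.continuousAt hΩ₁ hz₀).tendsto.comp hzs)
  refine tendsto_nhds_unique lhs ?_
  simpa only [Function.comp_def, hrel _ φ φ₀ hφ hφ₀] using rhs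

end ApRel

theorem statement8_general {n m : ℕ} {Ω₁ : Set (Cn n)} {Ω₂ : Set (Cn m)}
    (h₁ : IsBoundedDomain Ω₁) (h₂ : IsBoundedDomain Ω₂)
    {p : ℝ} (hp : 0 < p)
    (T : ApIsometry Ω₁ Ω₂ p) :
    (∀ z ∈ OmegaP1 T, ∃! w, w ∈ Ω₂ ∧ ApRel T z w) ∧
    ∀ F : Cn n → Cn m, (∀ z ∈ OmegaP1 T, F z ∈ Ω₂ ∧ ApRel T z (F z)) →
      Set.BijOn F (OmegaP1 T) (OmegaP2 T) ∧
      (∀ (zs : ℕ → Cn n) (z₀ : Cn n) (w₀ : Cn m),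
        (∀ j, zs j ∈ OmegaP1 T) → z₀ ∈ Ω₁ → w₀ ∈ Ω₂ →
        Filter.Tendsto zs Filter.atTop (𝓝 z₀) →
        Filter.Tendsto (fun j => F (zs j)) Filter.atTop (𝓝 w₀) →
        z₀ ∈ OmegaP1 T ∧ w₀ ∈ OmegaP2 T ∧ F z₀ = w₀) ∧
      ∀ z ∈ OmegaP1 T, ∀ φ, MemAp Ω₁ p φ → (φ z = 0 ↔ T.toFun φ (F z) = 0) := by
  have hb₁ := h₁.2.2
  have hb₂ := h₂.2.2
  refine ⟨?_, fun F hF => ⟨⟨?_, ?_, ?_⟩, ?_, ?_⟩⟩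
  · rintro z ⟨-, w, hw, hrel⟩
    exact ⟨w, ⟨hw, hrel⟩, fun w' ⟨hw', hrel'⟩ => hrel'.right_unique hb₁ hb₂ hp.le hrel hw' hw⟩
  · exact fun z hz => ⟨(hF z hz).1, z, hz.1, (hF z hz).2⟩
  · intro z hz z' hz' hFz
    exact (hF z hz).2.left_unique hb₁ hb₂ hp.le (hFz ▸ (hF z' hz').2) (hF z hz).1
  · rintro w ⟨hw, z, hz, hrel⟩
    have hz' : z ∈ OmegaP1 T := ⟨hz, w, hw, hrel⟩
    exact ⟨z, hz', (hF z hz').2.right_unique hb₁ hb₂ hp.le hrel (hF z hz').1 hw⟩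
  · intro zs z₀ w₀ hzs hz₀ hw₀ hlim hFlim
    have hrel₀ : ApRel T z₀ w₀ :=
      ApRel.of_tendsto h₁.1 h₂.1 (fun j => (hF _ (hzs j)).2) hz₀ hw₀ hlim hFlim
    have hz₀' : z₀ ∈ OmegaP1 T := ⟨hz₀, w₀, hw₀, hrel₀⟩
    exact ⟨hz₀', ⟨hw₀, z₀, hz₀, hrel₀⟩,
      (hF z₀ hz₀').2.right_unique hb₁ hb₂ hp.le hrel₀ (hF z₀ hz₀').1 hw₀⟩
  · exact fun z hz φ hφ => (hF z hz).2.apply_eq_zero_iff hb₁ hb₂ hp.le (hF z hz).1 hφ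

/-- (i) every `z ∈ Ω'₁` has a unique witness `w ∈ Ω₂`, and any map `F`
realizing the witnesses is a bijection `Ω'₁ → Ω'₂`; (ii) limits of pairs `(z_j, F z_j)` inside
`Ω₁ × Ω₂` stay in `Ω'₁ × Ω'₂` with `F z₀ = w₀`; (iii) `φ(z) = 0 ↔ (Tφ)(F z) = 0` on `Ω'₁`. -/
theorem statement8 {n m : ℕ} {Ω₁ : Set (Cn n)} {Ω₂ : Set (Cn m)}
    (h₁ : IsBoundedDomain Ω₁) (h₂ : IsBoundedDomain Ω₂)
    {p : ℝ} (hp : 0 < p) (hpe : ∀ k : ℕ, p ≠ 2 * (k : ℝ))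
    (T : ApIsometry Ω₁ Ω₂ p) :
    (∀ z ∈ OmegaP1 T, ∃! w, w ∈ Ω₂ ∧ ApRel T z w) ∧
    ∀ F : Cn n → Cn m, (∀ z ∈ OmegaP1 T, F z ∈ Ω₂ ∧ ApRel T z (F z)) →
      Set.BijOn F (OmegaP1 T) (OmegaP2 T) ∧
      (∀ (zs : ℕ → Cn n) (z₀ : Cn n) (w₀ : Cn m),
        (∀ j, zs j ∈ OmegaP1 T) → z₀ ∈ Ω₁ → w₀ ∈ Ω₂ →
        Filter.Tendsto zs Filter.atTop (𝓝 z₀) →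
        Filter.Tendsto (fun j => F (zs j)) Filter.atTop (𝓝 w₀) →
        z₀ ∈ OmegaP1 T ∧ w₀ ∈ OmegaP2 T ∧ F z₀ = w₀) ∧
      ∀ z ∈ OmegaP1 T, ∀ φ, MemAp Ω₁ p φ → (φ z = 0 ↔ T.toFun φ (F z) = 0) :=
  statement8_general h₁ h₂ hp T
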